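/- arXiv:2602.15709 — 2 statements merged into one kernel-verified Lean document; each statement's English description precedes it below -/
import Mathlib

section
/- Let f : ℕ → (0,∞) satisfy f(k+1)/f(k) → c as k → ∞ for some c > 1. Define Ψ(k) as the least ℓ ∈ ℕ such that (∏_{j=1}^{ℓ} f(k+j-1)) / ((2 f(k-1))^ℓ (ℓ+1)!) ≥ 8 (with Ψ(k) = ∞ if no such ℓ exists). Then Ψ(k) is finite for every k ≥ 1, and moreover sup_k Ψ(k) < ∞. -/
/-!
Writing `(ℓ + 1)! = ∏_{j < ℓ} (j + 2)`, the quantity is the product of the factors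
`f (k + j) / (2 f (k - 1) (j + 2))`. The ratios `f (n + 1) / f n` eventually exceed some `r > 1`,
so `f (n + i) ≥ m rⁱ f n` with `m > 0` independent of `n`. Each factor is then at least
`m r^(j+1) / (2 (j + 2))`, a bound independent of `k` that tends to infinity, so the product of
these bounds exceeds `8` at a single `ℓ`, which works for every `k`.
-/

open Filter Finset
open scoped Nat

theorem exists_pos_mul_le_of_le_succ {h : ℕ → ℝ} (hpos : ∀ n, 0 < h n) {K : ℕ}
    (hmono : ∀ n ≥ K, h n ≤ h (n + 1)) : ∃ m > 0, ∀ n p, n ≤ p → m * h n ≤ h p := by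
  have hmon := monotoneOn_nat_Ici_of_le_succ hmono
  have hs : (range (K + 1)).Nonempty := nonempty_range_add_one
  have hmem : ∀ {n}, n ≤ K → n ∈ range (K + 1) := fun hn => mem_range.2 (Nat.lt_succ_of_le hn)
  set a := (range (K + 1)).inf' hs h
  set A := (range (K + 1)).sup' hs h
  have ha : 0 < a := (lt_inf'_iff hs).2 fun i _ => hpos i
  have hA : 0 < A := (hpos 0).trans_le (le_sup' h (hmem K.zero_le))
  have ha_le : ∀ p, a ≤ h p := by
    intro p
    rcases le_or_gt p K with hp | hp
    · exact inf'_le h (hmem hp)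
    · exact (inf'_le h (hmem le_rfl)).trans (hmon Set.self_mem_Ici (Set.mem_Ici.2 hp.le) hp.le)
  -- Up to `K` compare through `a ≤ h p` and `h n ≤ A`; from `K` on, `h` is monotone.
  refine ⟨min 1 (a / A), by positivity, fun n p hnp => ?_⟩
  rcases le_or_gt n K with hn | hn
  · calc min 1 (a / A) * h n ≤ a / A * A := by
          gcongr
          exacts [(hpos n).le, min_le_right _ _, le_sup' h (hmem hn)]
      _ = a := div_mul_cancel₀ a hA.ne'
      _ ≤ h p := ha_le p
  · calc min 1 (a / A) * h n ≤ 1 * h n := by gcongr; exacts [(hpos n).le, min_le_left _ _]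
      _ ≤ h p := by
          rw [one_mul]
          exact hmon (Set.mem_Ici.2 hn.le) (Set.mem_Ici.2 (hn.le.trans hnp)) hnp

theorem exists_pos_mul_pow_mul_le {f : ℕ → ℝ} (hf : ∀ n, 0 < f n) {r : ℝ} (hr : 0 < r) {K : ℕ}
    (hK : ∀ n ≥ K, r * f n ≤ f (n + 1)) : ∃ m > 0, ∀ n i, m * r ^ i * f n ≤ f (n + i) := by
  obtain ⟨m, hm, hle⟩ := exists_pos_mul_le_of_le_succ (h := fun n => f n / r ^ n)
    (fun n => div_pos (hf n) (pow_pos hr n)) fun n hn => by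
      rw [div_le_div_iff₀ (pow_pos hr n) (pow_pos hr (n + 1)), pow_succ]
      nlinarith [hK n hn, pow_pos hr n]
  refine ⟨m, hm, fun n i => ?_⟩
  have h := hle n (n + i) (Nat.le_add_right n i)
  rw [pow_add, ← mul_div_assoc, div_le_div_iff₀ (pow_pos hr n) (by positivity)] at h
  have hrn := pow_pos hr n
  nlinarith

theorem tendsto_prod_range_atTop {β : ℕ → ℝ} (hpos : ∀ j, 0 < β j)
    (h : Tendsto β atTop atTop) : Tendsto (fun ℓ => ∏ j ∈ range ℓ, β j) atTop atTop := by
  obtain ⟨N, hN⟩ := eventually_atTop.1 (h.eventually_ge_atTop 2)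
  rw [← tendsto_add_atTop_iff_nat N]
  refine tendsto_atTop_of_geom_le (prod_pos fun j _ => hpos j) one_lt_two fun n => ?_
  rw [show n + 1 + N = n + N + 1 by ring, prod_range_succ, mul_comm]
  exact mul_le_mul_of_nonneg_left (hN _ (Nat.le_add_left N n)) (prod_pos fun j _ => hpos j).le

theorem tendsto_pow_div_atTop {r : ℝ} (hr : 1 < r) :
    Tendsto (fun n : ℕ => r ^ n / n) atTop atTop := by
  have h := tendsto_pow_const_div_const_pow_of_one_lt 1 hr
  simp only [pow_one] at h
  have hpos : ∀ᶠ n : ℕ in atTop, (n : ℝ) / r ^ n ∈ Set.Ioi 0 :=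
    (eventually_ge_atTop 1).mono fun n hn => div_pos (Nat.cast_pos.2 hn) (pow_pos (zero_lt_one.trans hr) n)
  simpa only [Pi.inv_def, inv_div] using
    (tendsto_nhdsWithin_iff.2 ⟨h, hpos⟩).inv_tendsto_nhdsGT_zero

theorem factorial_succ_eq_prod_range (ℓ : ℕ) : (ℓ + 1)! = ∏ j ∈ range ℓ, (j + 2) := by
  rw [← prod_range_add_one_eq_factorial, prod_range_succ']
  simp

theorem prod_div_pow_mul_factorial (a : ℕ → ℝ) (b : ℝ) (ℓ : ℕ) :
    (∏ j ∈ range ℓ, a j) / (b ^ ℓ * ((ℓ + 1)! : ℝ)) = ∏ j ∈ range ℓ, a j / (b * (j + 2)) := by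
  rw [factorial_succ_eq_prod_range, prod_div_distrib, prod_mul_distrib, prod_const, card_range]
  push_cast
  rfl

theorem stmt_4 (f : ℕ → ℝ) (hf : ∀ k, 0 < f k) (c : ℝ) (hc : 1 < c)
    (hlim : Tendsto (fun k => f (k + 1) / f k) atTop (nhds c)) :
    ∃ B : ℕ, ∀ k : ℕ, 1 ≤ k → ∃ ℓ : ℕ, 1 ≤ ℓ ∧ ℓ ≤ B ∧
      8 ≤ (∏ j ∈ Finset.range ℓ, f (k + j)) /
        ((2 * f (k - 1)) ^ ℓ * (Nat.factorial (ℓ + 1) : ℝ)) := by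
  obtain ⟨r, hr, hrc⟩ := exists_between hc
  obtain ⟨K, hK⟩ := eventually_atTop.1 (hlim.eventually_const_le hrc)
  obtain ⟨m, hm, hgrowth⟩ := exists_pos_mul_pow_mul_le hf (zero_lt_one.trans hr) fun n hn =>
    (le_div_iff₀ (hf n)).1 (hK n hn)
  set β : ℕ → ℝ := fun j => m * r ^ (j + 1) / (2 * (j + 2))
  have hβpos : ∀ j, 0 < β j := fun j => by positivity
  have hβ : Tendsto β atTop atTop := by
    refine (((tendsto_add_atTop_iff_nat 2).2 (tendsto_pow_div_atTop hr)).const_mul_atTop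
      (by positivity : 0 < m / (2 * r))).congr fun j => ?_
    simp only [β]
    push_cast
    field_simp
    ring
  obtain ⟨ℓ, hℓ8, hℓ1⟩ := ((tendsto_prod_range_atTop hβpos hβ).eventually_ge_atTop 8).and
    (eventually_ge_atTop 1) |>.exists
  refine ⟨ℓ, fun k hk => ⟨ℓ, hℓ1, le_rfl, ?_⟩⟩
  rw [prod_div_pow_mul_factorial]
  refine hℓ8.trans (prod_le_prod (fun j _ => (hβpos j).le) fun j _ => ?_)
  have h := hgrowth (k - 1) (j + 1)
  rw [show k - 1 + (j + 1) = k + j by omega] at h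
  have := hf (k - 1)
  simp only [β]
  rw [div_le_div_iff₀ (by positivity) (by positivity)]
  nlinarith
end

section
/- Let f : ℕ → (0,∞) and for k, ℓ ∈ ℕ define A_{k,ℓ} = Σ over all finitely supported sequences (y_j)_{j ≥ k} of non-negative integers with Σ_{j ≥ k} y_j = ℓ of ∏_{j ≥ k} (f(k)/f(j))^{y_j}, assuming all these series converge. Then for every k and every ℓ ≥ 1, A_{k,ℓ} = Σ_{r = k}^{∞} (f(k)/f(r))^ℓ · A_{r, ℓ−1}. -/
/-!
Split the sequences `y` of mass `ℓ + 1` supported in `[k, ∞)` according to the index `r` of their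
first non-zero entry: removing one unit at `r` is a bijection onto the sequences of mass `ℓ`
supported in `[r, ∞)`, and it turns the weight `∏ (f k / f j) ^ y j` into
`(f k / f r) ^ (ℓ + 1) * ∏ (f r / f j) ^ z j`. Summing first over each fibre gives the recursion.
-/

/-- The index set of the series `A k l`. -/
abbrev TailSeq (k l : ℕ) : Type :=
  {y : ℕ →₀ ℕ // (∀ j ∈ y.support, k ≤ j) ∧ y.sum (fun _ m => m) = l}

namespace Finsupp

theorem sum_add_single_one {α : Type*} (z : α →₀ ℕ) (c : α) :
    (z + single c 1).sum (fun _ m => m) = z.sum (fun _ m => m) + 1 := by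
  rw [sum_add_index' (fun _ => rfl) (fun _ _ _ => rfl), sum_single_index rfl]

theorem isLeast_support_add_single {α : Type*} [LinearOrder α] {z : α →₀ ℕ} {c : α}
    (hz : ∀ j ∈ z.support, c ≤ j) : IsLeast (↑(z + single c 1).support) c := by
  refine ⟨by simp, fun j hj => ?_⟩
  rcases Finset.mem_union.mp (support_add hj) with h | h
  · exact hz j h
  · exact (Finset.mem_singleton.mp (support_single_subset h)).ge

theorem prod_div_pow_add_single {K : Type*} [Field K] (g : ℕ → K) (a : K) (c : ℕ)
    (z : ℕ →₀ ℕ) :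
    (z + single c 1).prod (fun j m => (a / g j) ^ m) =
      (a / g c) ^ (z.sum (fun _ m => m) + 1) * z.prod fun j m => (g c / g j) ^ m := by
  rw [prod_add_index' (fun _ => pow_zero _) (fun _ _ _ => pow_add _ _ _),
    prod_single_index (h := fun j m => (a / g j) ^ m) (pow_zero _), pow_one]
  rcases eq_or_ne (g c) 0 with hc | hc
  · simp [hc] -- both sides vanish, since `a / 0 = 0`
  · have factor : (z.prod fun j m => (a / g j) ^ m) =
        z.prod fun j m => (a / g c) ^ m * (g c / g j) ^ m :=
      prod_congr fun j _ => by rw [← mul_pow, div_mul_div_cancel₀ hc]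
    rw [factor, prod_mul, Finsupp.prod, Finsupp.sum, Finset.prod_pow_eq_pow_sum]
    ring

end Finsupp

namespace TailSeq

open Finsupp

noncomputable def consSingle (k l : ℕ) (p : Σ r, TailSeq (k + r) l) : TailSeq k (l + 1) :=
  ⟨p.2.1 + single (k + p.1) 1,
    fun _ hj => (Nat.le_add_right k p.1).trans ((isLeast_support_add_single p.2.2.1).2 hj),
    by rw [sum_add_single_one, p.2.2.2]⟩

theorem consSingle_injective (k l : ℕ) : Function.Injective (consSingle k l) := by
  rintro ⟨r₁, z₁, hz₁, _⟩ ⟨r₂, z₂, hz₂, _⟩ h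
  have hsum : z₁ + single (k + r₁) 1 = z₂ + single (k + r₂) 1 := congrArg Subtype.val h
  have hr : r₁ = r₂ := by
    have := (isLeast_support_add_single hz₁).unique (hsum ▸ isLeast_support_add_single hz₂)
    omega
  subst hr
  obtain rfl : z₁ = z₂ := add_right_cancel hsum
  rfl

theorem consSingle_surjective (k l : ℕ) : Function.Surjective (consSingle k l) := by
  rintro ⟨y, hyk, hyl⟩
  have hne : y.support.Nonempty := support_nonempty_iff.mpr (by rintro rfl; simp at hyl)
  have hmin := y.support.isLeast_min' hne
  obtain ⟨r, hr⟩ := Nat.exists_eq_add_of_le (hyk _ hmin.1)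
  have hle : single (k + r) 1 ≤ y := by
    rw [single_le_iff, Nat.one_le_iff_ne_zero, ← mem_support_iff, ← hr]
    exact hmin.1
  have hy : y - single (k + r) 1 + single (k + r) 1 = y := tsub_add_cancel_of_le hle
  refine ⟨⟨r, y - single (k + r) 1, fun j hj => ?_, ?_⟩, Subtype.ext hy⟩
  · exact hr ▸ hmin.2 (support_tsub hj)
  · have := sum_add_single_one (y - single (k + r) 1) (k + r)
    rw [hy] at this
    omega

noncomputable def sigmaEquiv (k l : ℕ) : (Σ r, TailSeq (k + r) l) ≃ TailSeq k (l + 1) :=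
  Equiv.ofBijective _ ⟨consSingle_injective k l, consSingle_surjective k l⟩

end TailSeq

theorem stmt_15_general (f : ℕ → ℝ)
    (A : ℕ → ℕ → ℝ)
    (hA : ∀ k l : ℕ,
      HasSum (fun y : {y : ℕ →₀ ℕ // (∀ j ∈ y.support, k ≤ j) ∧ y.sum (fun _ m => m) = l} =>
        ∏ j ∈ (y : ℕ →₀ ℕ).support, (f k / f j) ^ ((y : ℕ →₀ ℕ) j)) (A k l)) :
    ∀ k l : ℕ, 1 ≤ l →
      HasSum (fun r : ℕ => (f k / f (k + r)) ^ l * A (k + r) (l - 1)) (A k l) := by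
  rintro k l hl
  obtain ⟨l, rfl⟩ := Nat.exists_eq_add_of_le' hl
  rw [Nat.add_sub_cancel]
  have hsigma : HasSum (fun p : Σ r, TailSeq (k + r) l =>
      (f k / f (k + p.1)) ^ (l + 1) * p.2.1.prod fun j m => (f (k + p.1) / f j) ^ m)
      (A k (l + 1)) := by
    convert (TailSeq.sigmaEquiv k l).hasSum_iff.mpr (hA k (l + 1)) using 2 with p
    have hweight := Finsupp.prod_div_pow_add_single f (f k) (k + p.1) p.2.1
    rw [p.2.2.2] at hweight
    exact hweight.symm
  exact hsigma.sigma fun r => (hA (k + r) l).mul_left _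

theorem stmt_15 (f : ℕ → ℝ) (hf : ∀ n, 0 < f n)
    (A : ℕ → ℕ → ℝ)
    (hA : ∀ k l : ℕ,
      HasSum (fun y : {y : ℕ →₀ ℕ // (∀ j ∈ y.support, k ≤ j) ∧ y.sum (fun _ m => m) = l} =>
        ∏ j ∈ (y : ℕ →₀ ℕ).support, (f k / f j) ^ ((y : ℕ →₀ ℕ) j)) (A k l)) :
    ∀ k l : ℕ, 1 ≤ l →
      HasSum (fun r : ℕ => (f k / f (k + r)) ^ l * A (k + r) (l - 1)) (A k l) :=
  stmt_15_general f A hA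
end
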